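/- arXiv:2003.13756 — 6 statements merged into one kernel-verified Lean document; each statement's English description precedes it below -/
import Mathlib

section
/- Define α(a,φ) = A·a^(−1/2)·(exp(√(3/8)φ) + C·exp(−√(3/8)φ)) and β(a,φ) = −√6·A·a^(−3/2)·(exp(√(3/8)φ) − C·exp(−√(3/8)φ)) + B, for constants A, B ∈ ℝ, C > 0, on the domain a > 0. Then (α, β) satisfies the system: α + 2a·∂α/∂a = 0, a²·∂β/∂a − 6·∂α/∂φ = 0, and 3α + 2a·∂β/∂φ = 0. -/
theorem stmt1 (A B C : ℝ) (hC : 0 < C) (α β : ℝ → ℝ → ℝ)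
    (hα : ∀ a φ : ℝ, α a φ =
      A * a ^ (-(1:ℝ)/2) *
        (Real.exp (Real.sqrt (3/8) * φ) + C * Real.exp (-Real.sqrt (3/8) * φ)))
    (hβ : ∀ a φ : ℝ, β a φ =
      -Real.sqrt 6 * A * a ^ (-(3:ℝ)/2) *
        (Real.exp (Real.sqrt (3/8) * φ) - C * Real.exp (-Real.sqrt (3/8) * φ)) + B) :
    ∀ a : ℝ, 0 < a → ∀ φ : ℝ,
      α a φ + 2 * a * deriv (fun x => α x φ) a = 0 ∧
      a ^ 2 * deriv (fun x => β x φ) a - 6 * deriv (fun y => α a y) φ = 0 ∧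
      3 * α a φ + 2 * a * deriv (fun y => β a y) φ = 0 := by
  intro a ha φ
  have hane : a ≠ 0 := ne_of_gt ha
  set s : ℝ := Real.sqrt (3/8) with hs
  set E : ℝ := Real.exp (s * φ) + C * Real.exp (-s * φ) with hE
  set F : ℝ := Real.exp (s * φ) - C * Real.exp (-s * φ) with hF
  -- constants facts
  have hs64 : s = Real.sqrt 6 / 4 := by
    rw [hs, show (3:ℝ)/8 = (Real.sqrt 6 / 4)^2 by
      rw [div_pow, Real.sq_sqrt (by norm_num : (6:ℝ) ≥ 0)]; norm_num,
      Real.sqrt_sq (by positivity)]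
  have h6 : Real.sqrt 6 * Real.sqrt 6 = 6 := Real.mul_self_sqrt (by norm_num)
  -- a-derivative of α
  have dαa : HasDerivAt (fun x : ℝ => A * x ^ (-(1:ℝ)/2) * E)
      (A * ((-(1:ℝ)/2) * a ^ ((-(1:ℝ)/2) - 1)) * E) a := by
    exact ((Real.hasDerivAt_rpow_const (Or.inl hane)).const_mul A).mul_const E
  -- a-derivative of β
  have dβa : HasDerivAt (fun x : ℝ => -Real.sqrt 6 * A * x ^ (-(3:ℝ)/2) * F + B)
      (-Real.sqrt 6 * A * ((-(3:ℝ)/2) * a ^ ((-(3:ℝ)/2) - 1)) * F) a := by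
    exact (((Real.hasDerivAt_rpow_const (Or.inl hane)).const_mul
      (-Real.sqrt 6 * A)).mul_const F).add_const B
  -- φ-derivatives
  have de1 : HasDerivAt (fun y : ℝ => Real.exp (s * y)) (Real.exp (s * φ) * (s * 1)) φ :=
    ((hasDerivAt_id φ).const_mul s).exp
  have de2 : HasDerivAt (fun y : ℝ => Real.exp (-s * y)) (Real.exp (-s * φ) * (-s * 1)) φ :=
    ((hasDerivAt_id φ).const_mul (-s)).exp
  have dαφ : HasDerivAt (fun y : ℝ => A * a ^ (-(1:ℝ)/2) *
      (Real.exp (s * y) + C * Real.exp (-s * y)))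
      (A * a ^ (-(1:ℝ)/2) * (Real.exp (s * φ) * (s * 1) + C * (Real.exp (-s * φ) * (-s * 1)))) φ :=
    (de1.add (de2.const_mul C)).const_mul _
  have dβφ : HasDerivAt (fun y : ℝ => -Real.sqrt 6 * A * a ^ (-(3:ℝ)/2) *
      (Real.exp (s * y) - C * Real.exp (-s * y)) + B)
      (-Real.sqrt 6 * A * a ^ (-(3:ℝ)/2) *
        (Real.exp (s * φ) * (s * 1) - C * (Real.exp (-s * φ) * (-s * 1)))) φ :=
    ((de1.sub (de2.const_mul C)).const_mul _).add_const B
  -- rpow arithmetic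
  have r1 : a ^ ((-(1:ℝ)/2) - 1) * a = a ^ (-(1:ℝ)/2) := by
    rw [← Real.rpow_add_one hane]; norm_num
  have r2 : a ^ ((-(3:ℝ)/2) - 1) * a ^ 2 = a ^ (-(1:ℝ)/2) := by
    rw [show a ^ 2 = a * a by ring, ← mul_assoc, ← Real.rpow_add_one hane,
      ← Real.rpow_add_one hane]; norm_num
  have r3 : a ^ (-(3:ℝ)/2) * a = a ^ (-(1:ℝ)/2) := by
    rw [← Real.rpow_add_one hane]; norm_num
  refine ⟨?_, ?_, ?_⟩
  · have : deriv (fun x => α x φ) a = A * ((-(1:ℝ)/2) * a ^ ((-(1:ℝ)/2) - 1)) * E := by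
      rw [show (fun x => α x φ) = fun x : ℝ => A * x ^ (-(1:ℝ)/2) * E by
        funext x; rw [hα]]
      exact dαa.deriv
    rw [this, hα]
    rw [← hE]
    linear_combination (-A * E) * r1
  · have h1 : deriv (fun x => β x φ) a
        = -Real.sqrt 6 * A * ((-(3:ℝ)/2) * a ^ ((-(3:ℝ)/2) - 1)) * F := by
      rw [show (fun x => β x φ) = fun x : ℝ => -Real.sqrt 6 * A * x ^ (-(3:ℝ)/2) * F + B by
        funext x; rw [hβ]]
      exact dβa.deriv
    have h2 : deriv (fun y => α a y)  φ
        = A * a ^ (-(1:ℝ)/2) * (Real.exp (s * φ) * (s * 1) + C * (Real.exp (-s * φ) * (-s * 1))) := by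
      rw [show (fun y => α a y) = fun y : ℝ => A * a ^ (-(1:ℝ)/2) *
        (Real.exp (s * y) + C * Real.exp (-s * y)) by funext y; rw [hα]]
      exact dαφ.deriv
    rw [h1, h2]
    linear_combination ((3:ℝ)/2 * Real.sqrt 6 * A * F) * r2
      + (-6 * A * a ^ (-(1:ℝ)/2) * F) * hs64
  · have h2 : deriv (fun y => β a y) φ
        = -Real.sqrt 6 * A * a ^ (-(3:ℝ)/2) *
          (Real.exp (s * φ) * (s * 1) - C * (Real.exp (-s * φ) * (-s * 1))) := by
      rw [show (fun y => β a y) = fun y : ℝ => -Real.sqrt 6 * A * a ^ (-(3:ℝ)/2) *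
        (Real.exp (s * y) - C * Real.exp (-s * y)) + B by funext y; rw [hβ]]
      exact dβφ.deriv
    rw [h2, hα, ← hE]
    linear_combination (-3 * A * E) * r3
      + (-2 * Real.sqrt 6 * (A * a ^ (-(3:ℝ)/2) * a * E)) * hs64
      + (-(A * a ^ (-(3:ℝ)/2) * a * E) / 2) * h6
end

section
/- Let a(t) = k₁·(3t + k₂)^(1/3) and φ(t) = ±√(2/3)·ln|3t + k₂| + k₃ with k₁ > 0, k₂, k₃ ∈ ℝ. Then on the interval where 3t + k₂ > 0, the pair (a, φ) satisfies the equations 6a·a'' + 3(a')² + (3/2)·a²·(φ')² = 0, a³·φ'' + 3a²·a'·φ' = 0, and the energy condition 3a·(a')² − a³·(φ')²/2 = 0. -/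
/-! With `u = 3t + k₂` and `c = ±√(2/3)` we have `a' = k₁ u^{-2/3}`, `a'' = -2 k₁ u^{-5/3}`,
`φ' = 3c/u` and `φ'' = -9c/u²`. Writing `x = u^{1/3}`, every term of each equation is a multiple
of the same power of `x`, and the coefficients cancel because `c² = 2/3`. -/

open Real Filter Topology

section AffineComposition

variable {α β k p c d t : ℝ}

lemma hasDerivAt_affine (α β t : ℝ) : HasDerivAt (fun t => α * t + β) α t := by
  simpa using ((hasDerivAt_id t).const_mul α).add_const β

lemma hasDerivAt_const_mul_affine_rpow (h : 0 < α * t + β) :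
    HasDerivAt (fun t => k * (α * t + β) ^ p) (k * p * α * (α * t + β) ^ (p - 1)) t :=
  (((hasDerivAt_affine α β t).rpow_const (Or.inl h.ne')).const_mul k).congr_deriv (by ring)

lemma deriv_const_mul_affine_rpow (h : 0 < α * t + β) :
    deriv (fun t => k * (α * t + β) ^ p) t = k * p * α * (α * t + β) ^ (p - 1) :=
  (hasDerivAt_const_mul_affine_rpow h).deriv

lemma eventually_pos_affine (h : 0 < α * t + β) : ∀ᶠ s in 𝓝 t, 0 < α * s + β :=
  (hasDerivAt_affine α β t).continuousAt.eventually (eventually_gt_nhds h)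

lemma deriv_deriv_const_mul_affine_rpow (h : 0 < α * t + β) :
    deriv (deriv fun t => k * (α * t + β) ^ p) t
      = k * p * (p - 1) * α ^ 2 * (α * t + β) ^ (p - 1 - 1) := by
  have hderiv : deriv (fun t => k * (α * t + β) ^ p)
      =ᶠ[𝓝 t] fun t => (k * p * α) * (α * t + β) ^ (p - 1) :=
    (eventually_pos_affine h).mono fun s hs => deriv_const_mul_affine_rpow hs
  rw [hderiv.deriv_eq, deriv_const_mul_affine_rpow h]
  ring

lemma hasDerivAt_const_mul_log_affine_add (h : 0 < α * t + β) :
    HasDerivAt (fun t => c * log (α * t + β) + d) (c * α / (α * t + β)) t :=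
  ((((hasDerivAt_affine α β t).log h.ne').const_mul c).add_const d).congr_deriv (by ring)

lemma deriv_const_mul_log_affine_add (h : 0 < α * t + β) :
    deriv (fun t => c * log (α * t + β) + d) t = c * α / (α * t + β) :=
  (hasDerivAt_const_mul_log_affine_add h).deriv

lemma deriv_deriv_const_mul_log_affine_add (h : 0 < α * t + β) :
    deriv (deriv fun t => c * log (α * t + β) + d) t = -(c * α ^ 2) / (α * t + β) ^ 2 := by
  have hderiv : deriv (fun t => c * log (α * t + β) + d)
      =ᶠ[𝓝 t] fun t => (c * α) * (α * t + β)⁻¹ :=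
    (eventually_pos_affine h).mono fun s hs => by
      rw [deriv_const_mul_log_affine_add hs, div_eq_mul_inv]
  rw [hderiv.deriv_eq]
  exact ((((hasDerivAt_affine α β t).inv h.ne').const_mul (c * α)).deriv).trans (by ring)

end AffineComposition

theorem stmt3_general (k₁ k₂ k₃ s : ℝ) (hs : s = 1 ∨ s = -1)
    (a φ : ℝ → ℝ)
    (ha : ∀ t : ℝ, a t = k₁ * (3 * t + k₂) ^ ((1:ℝ)/3))
    (hφ : ∀ t : ℝ, φ t = s * Real.sqrt (2/3) * Real.log |3 * t + k₂| + k₃) :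
    ∀ t : ℝ, 0 < 3 * t + k₂ →
      6 * a t * deriv (deriv a) t + 3 * (deriv a t) ^ 2
        + (3/2) * (a t) ^ 2 * (deriv φ t) ^ 2 = 0 ∧
      (a t) ^ 3 * deriv (deriv φ) t + 3 * (a t) ^ 2 * deriv a t * deriv φ t = 0 ∧
      3 * a t * (deriv a t) ^ 2 - (a t) ^ 3 * (deriv φ t) ^ 2 / 2 = 0 := by
  intro t ht
  have hc : (s * √(2/3)) ^ 2 = 2/3 := by
    rw [mul_pow, sq_sqrt (by norm_num)]
    rcases hs with rfl | rfl <;> norm_num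
  obtain rfl : a = fun t => k₁ * (3 * t + k₂) ^ ((1:ℝ)/3) := funext ha
  obtain rfl : φ = fun t => s * √(2/3) * log (3 * t + k₂) + k₃ :=
    funext fun t => by rw [hφ, log_abs]
  rw [deriv_deriv_const_mul_affine_rpow ht, deriv_const_mul_affine_rpow ht,
    deriv_deriv_const_mul_log_affine_add ht, deriv_const_mul_log_affine_add ht]
  simp only [rpow_sub_one ht.ne']
  set x := (3 * t + k₂) ^ ((1:ℝ)/3) with hx
  have hx3 : 3 * t + k₂ = x ^ 3 := by
    rw [hx, ← rpow_natCast, ← rpow_mul ht.le]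
    norm_num
  have hx0 : x ≠ 0 := (rpow_pos_of_pos ht _).ne'
  rw [hx3]
  refine ⟨?_, ?_, ?_⟩
  · field_simp
    linear_combination (27 * k₁ ^ 2) * hc
  · field_simp
    ring
  · field_simp
    linear_combination (-9 * k₁ ^ 3) * hc

theorem stmt3 (k₁ k₂ k₃ s : ℝ) (hk₁ : 0 < k₁) (hs : s = 1 ∨ s = -1)
    (a φ : ℝ → ℝ)
    (ha : ∀ t : ℝ, a t = k₁ * (3 * t + k₂) ^ ((1:ℝ)/3))
    (hφ : ∀ t : ℝ, φ t = s * Real.sqrt (2/3) * Real.log |3 * t + k₂| + k₃) :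
    ∀ t : ℝ, 0 < 3 * t + k₂ →
      6 * a t * deriv (deriv a) t + 3 * (deriv a t) ^ 2
        + (3/2) * (a t) ^ 2 * (deriv φ t) ^ 2 = 0 ∧
      (a t) ^ 3 * deriv (deriv φ) t + 3 * (a t) ^ 2 * deriv a t * deriv φ t = 0 ∧
      3 * a t * (deriv a t) ^ 2 - (a t) ^ 3 * (deriv φ t) ^ 2 / 2 = 0 :=
  stmt3_general k₁ k₂ k₃ s hs a φ ha hφ
end

section
/- Let V(φ) = k·(exp(√(3/8)φ) − C·exp(−√(3/8)φ))² with k > 0, C > 0, and let α(a,φ) = A·a^(−1/2)·(exp(√(3/8)φ) + C·exp(−√(3/8)φ)) with A ≠ 0, β(a,φ) = −√6·A·a^(−3/2)·(exp(√(3/8)φ) − C·exp(−√(3/8)φ)). Then for all a > 0, φ ∈ ℝ: (3/2)·α·V + β·a·V' + 2·(∂α/∂φ)·V' = 0 and (3/2)·α·V' + β·a·V'' + 3·(∂α/∂φ)·V = 0. -/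
/-! With `s = √(3/8)`, `u = e^{sφ} - C e^{-sφ}` and `w = e^{sφ} + C e^{-sφ}` satisfy `u' = s w`,
`w' = s u`, so `V = k u²`, `V' = 2ks uw`, `V'' = 2ks² (u² + w²)`, `∂α/∂φ = A a^{-1/2} s u` and
`β a = -√6 A a^{-1/2} u`. The two conditions then read
`A a^{-1/2} k u² w (3/2 - 2√6 s + 4s²) = 0` and `2 A a^{-1/2} k s u (u² + w²) (3/2 - √6 s) = 0`,
which hold since `s² = 3/8` and `√6 s = 3/2`. -/

open Real

lemma hasDerivAt_exp_mul_add_mul_exp_neg (s c x : ℝ) :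
    HasDerivAt (fun y => exp (s * y) + c * exp (-s * y))
      (s * (exp (s * x) - c * exp (-s * x))) x := by
  refine (((hasDerivAt_id' x).const_mul s).exp.fun_add
    (((hasDerivAt_id' x).const_mul (-s)).exp.const_mul c)).congr_deriv ?_
  ring

lemma hasDerivAt_exp_mul_sub_mul_exp_neg (s c x : ℝ) :
    HasDerivAt (fun y => exp (s * y) - c * exp (-s * y))
      (s * (exp (s * x) + c * exp (-s * x))) x := by
  refine (((hasDerivAt_id' x).const_mul s).exp.fun_sub
    (((hasDerivAt_id' x).const_mul (-s)).exp.const_mul c)).congr_deriv ?_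
  ring

section HyperbolicPair

variable {u w : ℝ → ℝ} {s : ℝ}

lemma deriv_const_mul_sq_of_hasDerivAt (hu : ∀ x, HasDerivAt u (s * w x) x) (k : ℝ) :
    deriv (fun y => k * u y ^ 2) = fun y => 2 * k * s * (u y * w y) := by
  funext x
  rw [((hu x).fun_pow 2 |>.const_mul k).deriv]
  ring

lemma deriv_mul_of_hasDerivAt_swap (hu : ∀ x, HasDerivAt u (s * w x) x)
    (hw : ∀ x, HasDerivAt w (s * u x) x) (x : ℝ) :
    deriv (fun y => u y * w y) x = s * (u x ^ 2 + w x ^ 2) := by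
  rw [((hu x).fun_mul (hw x)).deriv]
  ring

end HyperbolicPair

lemma sqrt_six_mul_sqrt_three_eighths : √6 * √(3 / 8) = 3 / 2 := by
  rw [← sqrt_mul (by norm_num), show (6 * (3 / 8) : ℝ) = (3 / 2) ^ 2 by norm_num,
    sqrt_sq (by norm_num)]

theorem stmt5_general (k C A : ℝ)
    (V : ℝ → ℝ)
    (hV : ∀ φ : ℝ, V φ =
      k * (Real.exp (Real.sqrt (3/8) * φ) - C * Real.exp (-Real.sqrt (3/8) * φ)) ^ 2)
    (α β : ℝ → ℝ → ℝ)
    (hα : ∀ a φ : ℝ, α a φ = A * a ^ (-(1:ℝ)/2) *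
      (Real.exp (Real.sqrt (3/8) * φ) + C * Real.exp (-Real.sqrt (3/8) * φ)))
    (hβ : ∀ a φ : ℝ, β a φ = -Real.sqrt 6 * A * a ^ (-(3:ℝ)/2) *
      (Real.exp (Real.sqrt (3/8) * φ) - C * Real.exp (-Real.sqrt (3/8) * φ))) :
    ∀ a : ℝ, 0 < a → ∀ φ : ℝ,
      (3/2) * α a φ * V φ + β a φ * a * deriv V φ
        + 2 * deriv (fun y => α a y) φ * deriv V φ = 0 ∧
      (3/2) * α a φ * deriv V φ + β a φ * a * deriv (deriv V) φ
        + 3 * deriv (fun y => α a y) φ * V φ = 0 := by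
  intro a ha φ
  set s := √(3 / 8)
  set u := fun y => exp (s * y) - C * exp (-s * y)
  set w := fun y => exp (s * y) + C * exp (-s * y)
  have hu x : HasDerivAt u (s * w x) x := hasDerivAt_exp_mul_sub_mul_exp_neg s C x
  have hw x : HasDerivAt w (s * u x) x := hasDerivAt_exp_mul_add_mul_exp_neg s C x
  have hdV : deriv V = fun y => 2 * k * s * (u y * w y) := by
    rw [show V = fun y => k * u y ^ 2 from funext hV, deriv_const_mul_sq_of_hasDerivAt hu]
  have hddV : deriv (deriv V) φ = 2 * k * s * (s * (u φ ^ 2 + w φ ^ 2)) := by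
    rw [hdV, deriv_const_mul (2 * k * s) (((hu φ).fun_mul (hw φ)).differentiableAt),
      deriv_mul_of_hasDerivAt_swap hu hw]
  have hdα : deriv (fun y => α a y) φ = A * a ^ (-(1:ℝ)/2) * (s * u φ) := by
    rw [show (fun y => α a y) = fun y => A * a ^ (-(1:ℝ)/2) * w y from funext (hα a),
      ((hw φ).const_mul _).deriv]
  have hβa : β a φ * a = -√6 * A * a ^ (-(1:ℝ)/2) * u φ := by
    rw [hβ, mul_right_comm, mul_assoc _ (a ^ _), ← rpow_add_one ha.ne',
      show -(3:ℝ)/2 + 1 = -(1:ℝ)/2 by norm_num]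
  have hs2 : s ^ 2 = 3 / 8 := sq_sqrt (by norm_num)
  have hs6 : √6 * s = 3 / 2 := sqrt_six_mul_sqrt_three_eighths
  rw [hα, hβa, hV, hddV, hdV, hdα]
  constructor
  · linear_combination (A * a ^ (-(1:ℝ)/2) * k * u φ ^ 2 * w φ) * (4 * hs2 - 2 * hs6)
  · linear_combination (2 * A * a ^ (-(1:ℝ)/2) * k * s * u φ * (u φ ^ 2 + w φ ^ 2)) * (-hs6)

theorem stmt5 (k C A : ℝ) (hk : 0 < k) (hC : 0 < C) (hA : A ≠ 0)
    (V : ℝ → ℝ)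
    (hV : ∀ φ : ℝ, V φ =
      k * (Real.exp (Real.sqrt (3/8) * φ) - C * Real.exp (-Real.sqrt (3/8) * φ)) ^ 2)
    (α β : ℝ → ℝ → ℝ)
    (hα : ∀ a φ : ℝ, α a φ = A * a ^ (-(1:ℝ)/2) *
      (Real.exp (Real.sqrt (3/8) * φ) + C * Real.exp (-Real.sqrt (3/8) * φ)))
    (hβ : ∀ a φ : ℝ, β a φ = -Real.sqrt 6 * A * a ^ (-(3:ℝ)/2) *
      (Real.exp (Real.sqrt (3/8) * φ) - C * Real.exp (-Real.sqrt (3/8) * φ))) :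
    ∀ a : ℝ, 0 < a → ∀ φ : ℝ,
      (3/2) * α a φ * V φ + β a φ * a * deriv V φ
        + 2 * deriv (fun y => α a y) φ * deriv V φ = 0 ∧
      (3/2) * α a φ * deriv V φ + β a φ * a * deriv (deriv V) φ
        + 3 * deriv (fun y => α a y) φ * V φ = 0 :=
  stmt5_general k C A V hV α β hα hβ
end

section
/- Let ξ be a vector field on open M ⊂ ℝᵐ with ∂_ξ g = 0 and ∂_ξ U = U₀ constant (i.e., ξʲ·∂U/∂xʲ = U₀ ∈ ℝ for all x ∈ M). If x(t) is an extremal of L = (1/2)g_{ij}ẋⁱẋʲ − U (i.e., g_{ij}(ẍʲ + Γʲ_{ks}ẋᵏẋˢ) + ∂U/∂xⁱ = 0), then the quantity g_{ij}ξⁱẋʲ + U₀·t is constant along x(t). -/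
/-- Partial derivative of a real-valued function on `ℝᵐ` in the `j`-th coordinate direction. -/
noncomputable def pd {n : ℕ} (f : (Fin n → ℝ) → ℝ) (j : Fin n) (x : Fin n → ℝ) : ℝ :=
  fderiv ℝ f x (Pi.single j 1)

lemma clm_apply_eq_sum {n : ℕ} (L : (Fin n → ℝ) →L[ℝ] ℝ) (v : Fin n → ℝ) :
    L v = ∑ k, L (Pi.single k 1) * v k := by
  have hv : v = ∑ k, v k • (Pi.single k 1 : Fin n → ℝ) := by
    ext i
    simp [Pi.single_apply, Finset.sum_apply]
  nth_rewrite 1 [hv]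
  rw [map_sum]
  simp [mul_comm]


lemma sum_comm3 {β : Type*} [AddCommMonoid β] {α : Type*} [Fintype α] (f : α → α → α → β) :
    (∑ i, ∑ j, ∑ k, f i j k) = ∑ k, ∑ j, ∑ i, f i j k := by
  rw [Finset.sum_comm]
  refine (Finset.sum_congr rfl fun j _ => Finset.sum_comm).trans Finset.sum_comm

lemma alg13 {n : ℕ} (G Gi : Matrix (Fin n) (Fin n) ℝ) (P : Fin n → Fin n → Fin n → ℝ)
    (S : Fin n → Fin n → ℝ) (Ξ V A W : Fin n → ℝ) (U₀ : ℝ)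
    (hsym : ∀ i j, G i j = G j i)
    (hinv : ∀ i r, (∑ j, G i j * Gi j r) = if i = r then 1 else 0)
    (hK : ∀ i j, (∑ k, P k i j * Ξ k) + (∑ k, G k j * S k i) + (∑ k, G i k * S k j) = 0)
    (hU : ∑ j, Ξ j * W j = U₀)
    (hext : ∀ i, (∑ j, G i j * (A j + ∑ k, ∑ s,
      ((1/2) * ∑ r, Gi j r * (P s r k + P k r s - P r k s)) * V k * V s)) + W i = 0) :
    (∑ i, ∑ j, (((∑ k, P k i j * V k) * Ξ i + G i j * (∑ k, S i k * V k)) * V j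
      + G i j * Ξ i * A j)) + U₀ * 1 = 0 := by
  set Q : ℝ := ∑ i, ∑ k, ∑ s, P i k s * Ξ i * V k * V s with hQ
  set A1 : ℝ := ∑ i, ∑ k, ∑ s, P k i s * Ξ i * V k * V s with hA1
  set B1 : ℝ := ∑ i, ∑ j, ∑ k, G i j * S i k * V k * V j with hB1
  set C1 : ℝ := ∑ i, ∑ j, G i j * Ξ i * A j with hC1
  -- Step 1: metric contraction of Christoffel symbols
  have hGΓ : ∀ i k s, (∑ j, G i j * ((1/2) * ∑ r, Gi j r * (P s r k + P k r s - P r k s)))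
      = (1/2) * (P s i k + P k i s - P i k s) := by
    intro i k s
    have h1 : ∀ j, G i j * ((1/2) * ∑ r, Gi j r * (P s r k + P k r s - P r k s))
        = ∑ r, (1/2) * (P s r k + P k r s - P r k s) * (G i j * Gi j r) := by
      intro j
      rw [Finset.mul_sum, Finset.mul_sum]
      exact Finset.sum_congr rfl fun r _ => by ring
    rw [Finset.sum_congr rfl fun j _ => h1 j, Finset.sum_comm]
    rw [Finset.sum_congr rfl fun r _ => (by rw [← Finset.mul_sum, hinv] :
      (∑ j, (1/2) * (P s r k + P k r s - P r k s) * (G i j * Gi j r))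
        = (1/2) * (P s r k + P k r s - P r k s) * (if i = r then 1 else 0))]
    simp [Finset.sum_ite_eq]
  -- Step 2: split the goal sum into A1 + B1 + C1
  have hsplit : (∑ i, ∑ j, (((∑ k, P k i j * V k) * Ξ i + G i j * (∑ k, S i k * V k)) * V j
      + G i j * Ξ i * A j))
      = (∑ i, ∑ j, ∑ k, P k i j * V k * Ξ i * V j) + B1 + C1 := by
    rw [hB1, hC1, add_assoc, ← Finset.sum_add_distrib, ← Finset.sum_add_distrib]
    refine Finset.sum_congr rfl fun i _ => ?_
    rw [← Finset.sum_add_distrib, ← Finset.sum_add_distrib]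
    refine Finset.sum_congr rfl fun j _ => ?_
    have e1 : (∑ k, P k i j * V k) * Ξ i * V j = ∑ k, P k i j * V k * Ξ i * V j := by
      rw [Finset.sum_mul, Finset.sum_mul]
    have e2 : G i j * (∑ k, S i k * V k) * V j = ∑ k, G i j * S i k * V k * V j := by
      rw [Finset.mul_sum, Finset.sum_mul]
      exact Finset.sum_congr rfl fun k _ => by ring
    rw [add_mul, e1, e2, add_assoc]
  -- the first summand equals A1
  have hAeq : (∑ i, ∑ j, ∑ k, P k i j * V k * Ξ i * V j) = A1 := by
    rw [hA1]
    refine Finset.sum_congr rfl fun i _ => ?_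
    rw [Finset.sum_comm]
    exact Finset.sum_congr rfl fun k _ => Finset.sum_congr rfl fun s _ => by ring
  -- Killing contraction: T1 + 2*T2 = 0
  set T1 : ℝ := ∑ i, ∑ j, (∑ k, P k i j * Ξ k) * (V i * V j) with hT1
  set T2 : ℝ := ∑ i, ∑ j, (∑ k, G k j * S k i) * (V i * V j) with hT2
  set T3 : ℝ := ∑ i, ∑ j, (∑ k, G i k * S k j) * (V i * V j) with hT3
  have hT : T1 + T2 + T3 = 0 := by
    rw [hT1, hT2, hT3, ← Finset.sum_add_distrib, ← Finset.sum_add_distrib]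
    have hz : ∀ i : Fin n, ((∑ j, (∑ k, P k i j * Ξ k) * (V i * V j))
        + (∑ j, (∑ k, G k j * S k i) * (V i * V j))
        + (∑ j, (∑ k, G i k * S k j) * (V i * V j))) = 0 := by
      intro i
      rw [← Finset.sum_add_distrib, ← Finset.sum_add_distrib]
      rw [Finset.sum_congr rfl fun j _ => (by
        rw [← add_mul, ← add_mul, hK i j, zero_mul] :
        ((∑ k, P k i j * Ξ k) * (V i * V j) + (∑ k, G k j * S k i) * (V i * V j)
          + (∑ k, G i k * S k j) * (V i * V j)) = 0)]
      simp
    rw [Finset.sum_congr rfl fun i _ => hz i]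
    simp
  have hT32 : T3 = T2 := by
    rw [hT3, hT2, Finset.sum_comm]
    refine Finset.sum_congr rfl fun i _ => Finset.sum_congr rfl fun j _ => ?_
    rw [Finset.sum_congr rfl fun k _ => (by rw [hsym j k] : G j k * S k i = G k j * S k i)]
    ring
  -- B1 = T2
  have hBT : B1 = T2 := by
    rw [hB1, sum_comm3 (fun i j k => G i j * S i k * V k * V j), hT2]
    refine Finset.sum_congr rfl fun k _ => Finset.sum_congr rfl fun j _ => ?_
    rw [Finset.sum_mul]
    exact Finset.sum_congr rfl fun i _ => by ring
  -- T1 = Q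
  have hTQ : T1 = Q := by
    rw [hT1, Finset.sum_congr rfl fun i _ => (Finset.sum_congr rfl fun j _ => by
      rw [Finset.sum_mul] :
      (∑ j, (∑ k, P k i j * Ξ k) * (V i * V j)) = ∑ j, ∑ k, P k i j * Ξ k * (V i * V j))]
    rw [sum_comm3 (fun i j k => P k i j * Ξ k * (V i * V j)), hQ]
    refine Finset.sum_congr rfl fun i _ => ?_
    rw [Finset.sum_comm]
    exact Finset.sum_congr rfl fun k _ => Finset.sum_congr rfl fun s _ => by ring
  -- swap lemma
  have hswap : (∑ i, ∑ k, ∑ s, Ξ i * P s i k * (V k * V s))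
      = ∑ i, ∑ k, ∑ s, Ξ i * P k i s * (V k * V s) := by
    refine Finset.sum_congr rfl fun i _ => ?_
    rw [Finset.sum_comm]
    exact Finset.sum_congr rfl fun k _ => Finset.sum_congr rfl fun s _ => by ring
  -- extremal rewriting
  have hext' : ∀ i, (∑ j, G i j * A j)
      = -(∑ k, ∑ s, ((1/2) * (P s i k + P k i s - P i k s)) * (V k * V s)) - W i := by
    intro i
    have h0 := hext i
    have hsplit2 : (∑ j, G i j * (A j + ∑ k, ∑ s,
        ((1/2) * ∑ r, Gi j r * (P s r k + P k r s - P r k s)) * V k * V s))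
        = (∑ j, G i j * A j) + ∑ k, ∑ s, ((1/2) * (P s i k + P k i s - P i k s)) * (V k * V s) := by
      rw [Finset.sum_congr rfl fun j _ => mul_add (G i j) _ _, Finset.sum_add_distrib]
      congr 1
      -- ∑ j, G i j * (∑ k ∑ s c j k s * V k * V s) = ∑k∑s (1/2)(...) * (Vk*Vs)
      rw [Finset.sum_congr rfl fun j _ => (by
        rw [Finset.mul_sum]
        exact Finset.sum_congr rfl fun k _ => by rw [Finset.mul_sum] :
        G i j * (∑ k, ∑ s, ((1/2) * ∑ r, Gi j r * (P s r k + P k r s - P r k s)) * V k * V s)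
          = ∑ k, ∑ s, G i j * (((1/2) * ∑ r, Gi j r * (P s r k + P k r s - P r k s)) * V k * V s))]
      rw [Finset.sum_comm]
      refine Finset.sum_congr rfl fun k _ => ?_
      rw [Finset.sum_comm]
      refine Finset.sum_congr rfl fun s _ => ?_
      rw [← hGΓ i k s, Finset.sum_mul]
      exact Finset.sum_congr rfl fun j _ => by ring
    rw [hsplit2] at h0
    linarith
  -- C1 computation
  have hC : C1 = -(A1 - (1/2) * Q) - U₀ := by
    have hC2 : C1 = ∑ i, Ξ i * (∑ j, G i j * A j) := by
      rw [hC1]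
      refine Finset.sum_congr rfl fun i _ => ?_
      rw [Finset.mul_sum]
      exact Finset.sum_congr rfl fun j _ => by ring
    rw [hC2, Finset.sum_congr rfl fun i _ => by rw [hext' i]]
    rw [Finset.sum_congr rfl fun i (_ : i ∈ Finset.univ) => (by ring :
      Ξ i * (-(∑ k, ∑ s, ((1/2) * (P s i k + P k i s - P i k s)) * (V k * V s)) - W i)
        = -(Ξ i * (∑ k, ∑ s, ((1/2) * (P s i k + P k i s - P i k s)) * (V k * V s))) - Ξ i * W i)]
    rw [Finset.sum_sub_distrib, Finset.sum_neg_distrib, hU]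
    have hR : (∑ i, Ξ i * (∑ k, ∑ s, ((1/2) * (P s i k + P k i s - P i k s)) * (V k * V s)))
        = A1 - (1/2) * Q := by
      have hexp : ∀ i, Ξ i * (∑ k, ∑ s, ((1/2) * (P s i k + P k i s - P i k s)) * (V k * V s))
          = (1/2) * ((∑ k, ∑ s, Ξ i * P s i k * (V k * V s))
            + (∑ k, ∑ s, Ξ i * P k i s * (V k * V s))
            - (∑ k, ∑ s, Ξ i * P i k s * (V k * V s))) := by
        intro i
        rw [Finset.mul_sum]
        rw [← Finset.sum_add_distrib, ← Finset.sum_sub_distrib, Finset.mul_sum]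
        refine Finset.sum_congr rfl fun k _ => ?_
        rw [Finset.mul_sum, ← Finset.sum_add_distrib, ← Finset.sum_sub_distrib, Finset.mul_sum]
        exact Finset.sum_congr rfl fun s _ => by ring
      rw [Finset.sum_congr rfl fun i _ => hexp i]
      rw [← Finset.mul_sum, Finset.sum_sub_distrib, Finset.sum_add_distrib, hswap]
      have e1 : (∑ i, ∑ k, ∑ s, Ξ i * P k i s * (V k * V s)) = A1 := by
        rw [hA1]
        exact Finset.sum_congr rfl fun i _ => Finset.sum_congr rfl fun k _ =>
          Finset.sum_congr rfl fun s _ => by ring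
      have e2 : (∑ i, ∑ k, ∑ s, Ξ i * P i k s * (V k * V s)) = Q := by
        rw [hQ]
        exact Finset.sum_congr rfl fun i _ => Finset.sum_congr rfl fun k _ =>
          Finset.sum_congr rfl fun s _ => by ring
      rw [e1, e2]
      ring
    rw [hR]
  rw [hsplit, hAeq, hBT, hC]
  have : T2 = -(1/2) * Q := by rw [← hTQ]; linarith [hT, hT32]
  rw [this]
  ring

theorem stmt13 {n : ℕ} (M : Set (Fin n → ℝ)) (hM : IsOpen M)
    (g ginv : (Fin n → ℝ) → Matrix (Fin n) (Fin n) ℝ)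
    (hgs : ∀ i j, ContDiffOn ℝ (⊤ : ℕ∞) (fun x => g x i j) M)
    (hsym : ∀ x ∈ M, (g x).IsSymm)
    (hinv : ∀ x ∈ M, g x * ginv x = 1)
    (Γ : Fin n → Fin n → Fin n → (Fin n → ℝ) → ℝ)
    (hΓ : ∀ j k s x, Γ j k s x = (1/2) * ∑ r,
      ginv x j r * (pd (fun y => g y r k) s x + pd (fun y => g y r s) k x
        - pd (fun y => g y k s) r x))
    (U : (Fin n → ℝ) → ℝ) (hU : ContDiffOn ℝ (⊤ : ℕ∞) U M)
    (ξ : (Fin n → ℝ) → Fin n → ℝ)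
    (hξ : ∀ i, ContDiffOn ℝ (⊤ : ℕ∞) (fun x => ξ x i) M)
    (hKill : ∀ x ∈ M, ∀ i j : Fin n,
      (∑ k, pd (fun y => g y i j) k x * ξ x k)
        + (∑ k, g x k j * pd (fun y => ξ y k) i x)
        + (∑ k, g x i k * pd (fun y => ξ y k) j x) = 0)
    (U₀ : ℝ)
    (hU₀ : ∀ x ∈ M, ∑ j, ξ x j * pd U j x = U₀)
    (γ : ℝ → Fin n → ℝ) (hγ : ContDiff ℝ 2 γ) (hγM : ∀ t, γ t ∈ M)
    (hext : ∀ t : ℝ, ∀ i : Fin n,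
      (∑ j, g (γ t) i j *
        (deriv (deriv (fun u => γ u j)) t
          + ∑ k, ∑ s, Γ j k s (γ t) * deriv (fun u => γ u k) t * deriv (fun u => γ u s) t))
        + pd U i (γ t) = 0) :
    ∀ t₁ t₂ : ℝ,
      (∑ i, ∑ j, g (γ t₁) i j * ξ (γ t₁) i * deriv (fun w => γ w j) t₁) + U₀ * t₁
        = (∑ i, ∑ j, g (γ t₂) i j * ξ (γ t₂) i * deriv (fun w => γ w j) t₂) + U₀ * t₂ := by
  have hγc : ∀ j, ContDiff ℝ 2 (fun u => γ u j) := fun j => (contDiff_pi.mp hγ) j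
  have hd1 : ∀ (j : Fin n) (t : ℝ), HasDerivAt (fun u => γ u j) (deriv (fun u => γ u j) t) t :=
    fun j t => (((hγc j).differentiable two_ne_zero) t).hasDerivAt
  have hd2 : ∀ (j : Fin n) (t : ℝ),
      HasDerivAt (deriv (fun u => γ u j)) (deriv (deriv (fun u => γ u j)) t) t := by
    intro j t
    have h2 : ContDiff ℝ (1 + 1) (fun u => γ u j) := by
      have := hγc j; norm_num at this ⊢; exact this
    have h3 := (contDiff_succ_iff_deriv.mp h2).2.2
    exact ((h3.differentiable one_ne_zero) t).hasDerivAt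
  have hγv : ∀ t : ℝ, HasDerivAt γ (fun j => deriv (fun u => γ u j) t) t := fun t =>
    hasDerivAt_pi.mpr fun j => hd1 j t
  have comp : ∀ (f : (Fin n → ℝ) → ℝ), ContDiffOn ℝ (⊤ : ℕ∞) f M → ∀ t : ℝ,
      HasDerivAt (fun u => f (γ u)) (∑ k, pd f k (γ t) * deriv (fun u => γ u k) t) t := by
    intro f hf t
    have hdf : DifferentiableAt ℝ f (γ t) :=
      (hf.contDiffAt (hM.mem_nhds (hγM t))).differentiableAt (by simp)
    have h := hdf.hasFDerivAt.comp_hasDerivAt t (hγv t)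
    have heq : (fderiv ℝ f (γ t)) (fun j => deriv (fun u => γ u j) t)
        = ∑ k, pd f k (γ t) * deriv (fun u => γ u k) t := by
      rw [clm_apply_eq_sum]; rfl
    rw [heq] at h
    exact h
  have key : ∀ t : ℝ, HasDerivAt
      (fun t => (∑ i, ∑ j, g (γ t) i j * ξ (γ t) i * deriv (fun w => γ w j) t) + U₀ * t) 0 t := by
    intro t
    have hterm : ∀ i j : Fin n, HasDerivAt
        (fun t => g (γ t) i j * ξ (γ t) i * deriv (fun w => γ w j) t)
        (((∑ k, pd (fun y => g y i j) k (γ t) * deriv (fun u => γ u k) t) * ξ (γ t) i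
            + g (γ t) i j * (∑ k, pd (fun y => ξ y i) k (γ t) * deriv (fun u => γ u k) t))
          * deriv (fun w => γ w j) t
          + g (γ t) i j * ξ (γ t) i * deriv (deriv (fun u => γ u j)) t) t :=
      fun i j => ((comp _ (hgs i j) t).mul (comp _ (hξ i) t)).mul (hd2 j t)
    have hsum : HasDerivAt
        (fun t => (∑ i, ∑ j, g (γ t) i j * ξ (γ t) i * deriv (fun w => γ w j) t) + U₀ * t)
        ((∑ i, ∑ j, (((∑ k, pd (fun y => g y i j) k (γ t) * deriv (fun u => γ u k) t) * ξ (γ t) i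
            + g (γ t) i j * (∑ k, pd (fun y => ξ y i) k (γ t) * deriv (fun u => γ u k) t))
          * deriv (fun w => γ w j) t
          + g (γ t) i j * ξ (γ t) i * deriv (deriv (fun u => γ u j)) t)) + U₀ * 1) t :=
      (HasDerivAt.fun_sum fun i _ => HasDerivAt.fun_sum fun j _ => hterm i j).fun_add
        ((hasDerivAt_id t).const_mul U₀)
    have hx := hγM t
    have hsym' : ∀ i j, g (γ t) i j = g (γ t) j i := fun i j => (hsym _ hx).apply j i
    have hinv' : ∀ i r, (∑ j, g (γ t) i j * ginv (γ t) j r) = if i = r then 1 else 0 := by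
      intro i r
      rw [← Matrix.mul_apply, hinv _ hx, Matrix.one_apply]
    have hext' : ∀ i, (∑ j, g (γ t) i j * (deriv (deriv (fun u => γ u j)) t
        + ∑ k, ∑ s, ((1/2) * ∑ r, ginv (γ t) j r *
            (pd (fun y => g y r k) s (γ t) + pd (fun y => g y r s) k (γ t)
              - pd (fun y => g y k s) r (γ t)))
          * deriv (fun u => γ u k) t * deriv (fun u => γ u s) t))
        + pd U i (γ t) = 0 := by
      intro i
      have h := hext t i
      simp only [hΓ] at h
      exact h
    have halg := alg13 (g (γ t)) (ginv (γ t))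
      (fun k i j => pd (fun y => g y i j) k (γ t))
      (fun i k => pd (fun y => ξ y i) k (γ t))
      (ξ (γ t)) (fun k => deriv (fun u => γ u k) t)
      (fun j => deriv (deriv (fun u => γ u j)) t)
      (fun i => pd U i (γ t)) U₀
      hsym' hinv' (hKill _ hx) (hU₀ _ hx) hext'
    convert hsum using 1
    symm
    exact halg
  intro t₁ t₂
  exact is_const_of_deriv_eq_zero (fun t => (key t).differentiableAt)
    (fun t => (key t).deriv) t₁ t₂
end

section
/- Let η_i : M → ℝ be smooth functions on open M ⊂ ℝᵐ, and ξ a smooth vector field satisfying (∂η_j/∂xⁱ)·ξⁱ·ẋʲ + η_i·(∂ξⁱ/∂xʲ)·ẋʲ invariance in the sense that ∂_{J¹ξ}φ̃ = 0 where φ̃_i = (∂η_i/∂xʲ − ∂η_j/∂xⁱ)ẋʲ. Then the 1-form with components ω_j = (∂η_j/∂xⁱ)ξⁱ + η_i·∂ξⁱ/∂xʲ is closed, i.e., ∂ω_j/∂xᵏ = ∂ω_k/∂xʲ for all j, k. -/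
section helpers
variable {n : ℕ} {f g : (Fin n → ℝ) → ℝ} {x : Fin n → ℝ} {j k : Fin n}

lemma pd_add (hf : DifferentiableAt ℝ f x) (hg : DifferentiableAt ℝ g x) :
    pd (fun y => f y + g y) j x = pd f j x + pd g j x := by
  simp [pd, fderiv_fun_add hf hg]

lemma pd_sub (hf : DifferentiableAt ℝ f x) (hg : DifferentiableAt ℝ g x) :
    pd (fun y => f y - g y) j x = pd f j x - pd g j x := by
  simp [pd, fderiv_fun_sub hf hg]

lemma pd_mul (hf : DifferentiableAt ℝ f x) (hg : DifferentiableAt ℝ g x) :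
    pd (fun y => f y * g y) j x = pd f j x * g x + f x * pd g j x := by
  simp [pd, fderiv_fun_mul hf hg]; ring

lemma pd_sum {F : Fin n → (Fin n → ℝ) → ℝ} (h : ∀ i, DifferentiableAt ℝ (F i) x) :
    pd (fun y => ∑ i, F i y) j x = ∑ i, pd (F i) j x := by
  simp [pd, fderiv_fun_sum (fun i _ => h i)]

lemma contDiffAt_pd (hf : ContDiffAt ℝ (⊤ : ℕ∞) f x) : ContDiffAt ℝ (⊤ : ℕ∞) (fun y => pd f j y) x :=
  (hf.fderiv_right (by simp)).clm_apply contDiffAt_const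

lemma pd_pd_symm (hf : ContDiffAt ℝ (⊤ : ℕ∞) f x) :
    pd (fun y => pd f j y) k x = pd (fun y => pd f k y) j x := by
  have hs : IsSymmSndFDerivAt ℝ f x := hf.isSymmSndFDerivAt (by rw [minSmoothness_of_isRCLikeNormedField]; exact WithTop.coe_le_coe.mpr le_top)
  have hd : DifferentiableAt ℝ (fderiv ℝ f) x :=
    (hf.fderiv_right (m := 1) (WithTop.coe_le_coe.mpr le_top)).differentiableAt one_ne_zero
  have h1 : ∀ v : Fin n → ℝ, fderiv ℝ (fun y => fderiv ℝ f y v) x =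
      (fderiv ℝ (fderiv ℝ f) x).flip v := by
    intro v
    rw [fderiv_clm_apply hd (differentiableAt_const v)]
    simp
  simp only [pd, h1]
  exact hs _ _
end helpers

theorem stmt14 {n : ℕ} (M : Set (Fin n → ℝ)) (hM : IsOpen M)
    (η ξ : (Fin n → ℝ) → Fin n → ℝ)
    (hη : ∀ i, ContDiffOn ℝ (⊤ : ℕ∞) (fun x => η x i) M)
    (hξ : ∀ i, ContDiffOn ℝ (⊤ : ℕ∞) (fun x => ξ x i) M)
    (φt : Fin n → (Fin n → ℝ) → (Fin n → ℝ) → ℝ)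
    (hφt : ∀ i x v, φt i x v =
      ∑ j, (pd (fun y => η y i) j x - pd (fun y => η y j) i x) * v j)
    -- the invariance hypothesis ∂_{J¹ξ} φ̃ = 0, componentwise
    (hinv : ∀ x ∈ M, ∀ v : Fin n → ℝ, ∀ i : Fin n,
      (∑ j, pd (fun y => ξ y j) i x * φt j x v)
        + (∑ j, pd (fun y => φt i y v) j x * ξ x j)
        + (∑ j, (pd (fun y => η y i) j x - pd (fun y => η y j) i x) *
            (∑ k, pd (fun y => ξ y j) k x * v k)) = 0)
    (ω : (Fin n → ℝ) → Fin n → ℝ)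
    (hω : ∀ x j, ω x j =
      (∑ i, pd (fun y => η y j) i x * ξ x i) + ∑ i, η x i * pd (fun y => ξ y i) j x) :
    ∀ x ∈ M, ∀ j k : Fin n,
      pd (fun y => ω y j) k x = pd (fun y => ω y k) j x := by
  intro x hx j k
  have hxM : M ∈ nhds x := hM.mem_nhds hx
  -- smoothness at every point of M (needed since we differentiate pd-functions near x)
  have cη : ∀ i, ∀ y ∈ M, ContDiffAt ℝ (⊤ : ℕ∞) (fun z => η z i) y :=
    fun i y hy => (hη i).contDiffAt (hM.mem_nhds hy)
  have cξ : ∀ i, ∀ y ∈ M, ContDiffAt ℝ (⊤ : ℕ∞) (fun z => ξ z i) y :=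
    fun i y hy => (hξ i).contDiffAt (hM.mem_nhds hy)
  have dη : ∀ i, ∀ y ∈ M, DifferentiableAt ℝ (fun z => η z i) y :=
    fun i y hy => (cη i y hy).differentiableAt (by simp)
  have dξ : ∀ i, ∀ y ∈ M, DifferentiableAt ℝ (fun z => ξ z i) y :=
    fun i y hy => (cξ i y hy).differentiableAt (by simp)
  have dpη : ∀ i l, ∀ y ∈ M, DifferentiableAt ℝ (fun z => pd (fun w => η w i) l z) y :=
    fun i l y hy => (contDiffAt_pd (cη i y hy)).differentiableAt (by simp)
  have dpξ : ∀ i l, ∀ y ∈ M, DifferentiableAt ℝ (fun z => pd (fun w => ξ w i) l z) y :=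
    fun i l y hy => (contDiffAt_pd (cξ i y hy)).differentiableAt (by simp)
  -- computation of pd ω
  have comp : ∀ j k : Fin n, pd (fun y => ω y j) k x =
      ∑ i, (pd (fun y => pd (fun z => η z j) i y) k x * ξ x i
            + pd (fun z => η z j) i x * pd (fun z => ξ z i) k x)
      + ∑ i, (pd (fun z => η z i) k x * pd (fun z => ξ z i) j x
            + η x i * pd (fun y => pd (fun z => ξ z i) j y) k x) := by
    intro j k
    have hrw : (fun y => ω y j) =
        fun y => (∑ i, pd (fun z => η z j) i y * ξ y i)
          + ∑ i, η y i * pd (fun z => ξ z i) j y := funext fun y => hω y j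
    rw [hrw, pd_add, pd_sum, pd_sum]
    · congr 1 <;> refine Finset.sum_congr rfl fun i _ => ?_
      · rw [pd_mul (dpη j i x hx) (dξ i x hx)]
      · rw [pd_mul (dη i x hx) (dpξ i j x hx)]
    · exact fun i => (dη i x hx).mul (dpξ i j x hx)
    · exact fun i => (dpη j i x hx).mul (dξ i x hx)
    · exact DifferentiableAt.fun_sum fun i _ => (dpη j i x hx).mul (dξ i x hx)
    · exact DifferentiableAt.fun_sum fun i _ => (dη i x hx).mul (dpξ i j x hx)
  -- simplify hinv at v = single k 1, i = j
  have single_sum : ∀ (c : Fin n → ℝ), ∑ m, c m * (Pi.single k 1 : Fin n → ℝ) m = c k := by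
    intro c
    simp [Pi.single_apply, mul_ite, Finset.sum_ite_eq']
  have hφt' : ∀ l (y : Fin n → ℝ), φt l y (Pi.single k 1) =
      pd (fun z => η z l) k y - pd (fun z => η z k) l y := by
    intro l y
    rw [hφt]
    exact single_sum _
  have hinv' := hinv x hx (Pi.single k 1) j
  rw [show (fun y => φt j y (Pi.single k 1)) =
      fun y => pd (fun z => η z j) k y - pd (fun z => η z k) j y from funext fun y => hφt' j y]
    at hinv'
  simp only [hφt'] at hinv'
  have hterm2 : ∀ l, pd (fun y => pd (fun z => η z j) k y - pd (fun z => η z k) j y) l x =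
      pd (fun y => pd (fun z => η z j) k y) l x - pd (fun y => pd (fun z => η z k) j y) l x :=
    fun l => pd_sub (dpη j k x hx) (dpη k j x hx)
  simp only [hterm2, single_sum] at hinv'
  -- now combine
  rw [comp j k, comp k j, ← sub_eq_zero]
  rw [← hinv']
  rw [← Finset.sum_add_distrib, ← Finset.sum_add_distrib, ← Finset.sum_sub_distrib,
    ← Finset.sum_add_distrib, ← Finset.sum_add_distrib]
  refine Finset.sum_congr rfl fun l _ => ?_
  have s1 : pd (fun y => pd (fun z => η z j) l y) k x
      = pd (fun y => pd (fun z => η z j) k y) l x := pd_pd_symm (cη j x hx)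
  have s2 : pd (fun y => pd (fun z => η z k) l y) j x
      = pd (fun y => pd (fun z => η z k) j y) l x := pd_pd_symm (cη k x hx)
  have s3 : pd (fun y => pd (fun z => ξ z l) j y) k x
      = pd (fun y => pd (fun z => ξ z l) k y) j x := pd_pd_symm (cξ l x hx)
  rw [s1, s2, s3]
  ring
end

section
/- Suppose V : ℝ → ℝ is smooth and there exist α, β of the form α(a,φ) = A·a^(−1/2)·k₊(φ), β(a,φ) = −√6·A·a^(−3/2)·k₋(φ) + B with A ≠ 0, B = 0, where k₊(φ) = exp(√(3/8)φ) + C·exp(−√(3/8)φ), k₋(φ) = exp(√(3/8)φ) − C·exp(−√(3/8)φ), C > 0, satisfying (3/2)αV + βaV' + 2(∂α/∂φ)V' = 0 for all a > 0, φ. Then V(φ) = k·k₋(φ)² for some constant k. -/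
open Filter Topology

theorem stmt16 (V : ℝ → ℝ) (hVs : ContDiff ℝ (⊤ : ℕ∞) V)
    (A B C : ℝ) (hA : A ≠ 0) (hB : B = 0) (hC : 0 < C)
    (kp km : ℝ → ℝ)
    (hkp : ∀ φ : ℝ, kp φ = Real.exp (Real.sqrt (3/8) * φ) + C * Real.exp (-Real.sqrt (3/8) * φ))
    (hkm : ∀ φ : ℝ, km φ = Real.exp (Real.sqrt (3/8) * φ) - C * Real.exp (-Real.sqrt (3/8) * φ))
    (α β : ℝ → ℝ → ℝ)
    (hα : ∀ a φ : ℝ, α a φ = A * a ^ (-(1:ℝ)/2) * kp φ)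
    (hβ : ∀ a φ : ℝ, β a φ = -Real.sqrt 6 * A * a ^ (-(3:ℝ)/2) * km φ + B)
    (hcond : ∀ a : ℝ, 0 < a → ∀ φ : ℝ,
      (3/2) * α a φ * V φ + β a φ * a * deriv V φ
        + 2 * deriv (fun y => α a y) φ * deriv V φ = 0) :
    ∃ k : ℝ, ∀ φ : ℝ, V φ = k * (km φ) ^ 2 := by
  set s : ℝ := Real.sqrt (3/8) with hs
  have hs0 : 0 < s := by rw [hs]; exact Real.sqrt_pos.mpr (by norm_num)
  have hs2 : s ^ 2 = 3/8 := by rw [hs]; exact Real.sq_sqrt (by norm_num)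
  have h6 : Real.sqrt 6 = 4 * s := by
    have h0 : (6:ℝ) = (4*s)^2 := by rw [mul_pow, hs2]; norm_num
    rw [h0, Real.sqrt_sq (by linarith)]
  -- differentiability of V and its derivatives
  have hV0d := contDiff_infty_iff_deriv.mp (hVs.of_le (by simp))
  have hV1d := contDiff_infty_iff_deriv.mp hV0d.2
  have hV2d := contDiff_infty_iff_deriv.mp hV1d.2
  have hVat : ∀ x : ℝ, HasDerivAt V (deriv V x) x := fun x => (hV0d.1 x).hasDerivAt
  have hW1at : ∀ x : ℝ, HasDerivAt (deriv V) (deriv (deriv V) x) x := fun x => (hV1d.1 x).hasDerivAt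
  have hW2at : ∀ x : ℝ, HasDerivAt (deriv (deriv V)) (deriv (deriv (deriv V)) x) x :=
    fun x => (hV2d.1 x).hasDerivAt
  -- derivatives of kp, km
  have hkpfun : kp = fun y => Real.exp (s*y) + C * Real.exp (-(s*y)) := by
    funext y; rw [hkp y, neg_mul]
  have hkmfun : km = fun y => Real.exp (s*y) - C * Real.exp (-(s*y)) := by
    funext y; rw [hkm y, neg_mul]
  have hkpd : ∀ x : ℝ, HasDerivAt kp (s * km x) x := by
    intro x
    have h1 : HasDerivAt (fun y : ℝ => Real.exp (s*y)) (Real.exp (s*x) * s) x := by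
      simpa using ((hasDerivAt_id x).const_mul s).exp
    have h2 : HasDerivAt (fun y : ℝ => C * Real.exp (-(s*y))) (C * (Real.exp (-(s*x)) * (-s))) x := by
      simpa using ((((hasDerivAt_id x).const_mul s).neg).exp.const_mul C)
    have h3 : HasDerivAt (fun y => Real.exp (s*y) + C * Real.exp (-(s*y))) (Real.exp (s*x) * s + C * (Real.exp (-(s*x)) * (-s))) x := h1.add h2
    rw [← hkpfun] at h3
    have hv : s * km x = Real.exp (s*x) * s + C * (Real.exp (-(s*x)) * (-s)) := by
      rw [hkm x, neg_mul]; ring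
    rw [hv]; exact h3
  have hkmd : ∀ x : ℝ, HasDerivAt km (s * kp x) x := by
    intro x
    have h1 : HasDerivAt (fun y : ℝ => Real.exp (s*y)) (Real.exp (s*x) * s) x := by
      simpa using ((hasDerivAt_id x).const_mul s).exp
    have h2 : HasDerivAt (fun y : ℝ => C * Real.exp (-(s*y))) (C * (Real.exp (-(s*x)) * (-s))) x := by
      simpa using ((((hasDerivAt_id x).const_mul s).neg).exp.const_mul C)
    have h3 : HasDerivAt (fun y => Real.exp (s*y) - C * Real.exp (-(s*y))) (Real.exp (s*x) * s - C * (Real.exp (-(s*x)) * (-s))) x := h1.sub h2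
    rw [← hkmfun] at h3
    have hv : s * kp x = Real.exp (s*x) * s - C * (Real.exp (-(s*x)) * (-s)) := by
      rw [hkp x, neg_mul]; ring
    rw [hv]; exact h3
  -- the basic first-order relation P1
  have P1 : ∀ x : ℝ, km x * deriv V x = 2*s*(kp x * V x) := by
    intro x
    have hc := hcond 1 one_pos x
    have hα1 : (fun y => α 1 y) = fun y => A * kp y := by
      funext y; rw [hα, Real.one_rpow]; ring
    rw [hα1] at hc
    have hder : deriv (fun y => A * kp y) x = A * (s * km x) := ((hkpd x).const_mul A).deriv
    rw [hα, hβ, hB, Real.one_rpow, Real.one_rpow, hder, h6] at hc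
    have hX : A * (3/2 * (kp x * V x) - 2*s*(km x * deriv V x)) = 0 := by linear_combination hc
    have hX2 := (mul_eq_zero.mp hX).resolve_left hA
    linear_combination (-(4*s)/3) * hX2 - (8/3)*(km x * deriv V x) * hs2
  -- differentiate P1 twice
  have P2 : ∀ x : ℝ, s*(kp x*deriv V x) + km x*deriv (deriv V) x
      = 2*s*(s*(km x*V x) + kp x*deriv V x) := by
    intro x
    have hzero : (fun y => km y * deriv V y - 2*s*(kp y * V y)) = fun _ => (0:ℝ) :=
      funext fun y => by rw [P1 y]; ring
    have hd := ((hkmd x).mul (hW1at x)).sub (((hkpd x).mul (hVat x)).const_mul (2*s))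
    have h0 : HasDerivAt (fun y => km y * deriv V y - 2*s*(kp y * V y)) 0 x := by
      rw [hzero]; exact hasDerivAt_const x 0
    have key := hd.unique h0
    linear_combination key
  have P3 : ∀ x : ℝ, s*(s*(km x*deriv V x) + kp x*deriv (deriv V) x)
      + (s*(kp x*deriv (deriv V) x) + km x*deriv (deriv (deriv V)) x)
      = 2*s*(s*(s*(kp x*V x) + km x*deriv V x)
        + (s*(km x*deriv V x) + kp x*deriv (deriv V) x)) := by
    intro x
    have hzero : (fun y => s*(kp y*deriv V y) + km y*deriv (deriv V) y
        - 2*s*(s*(km y*V y) + kp y*deriv V y)) = fun _ => (0:ℝ) :=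
      funext fun y => by rw [← P2 y]; ring
    have hd := ((((hkpd x).mul (hW1at x)).const_mul s).add ((hkmd x).mul (hW2at x))).sub
      (((((hkmd x).mul (hVat x)).const_mul s).add ((hkpd x).mul (hW1at x))).const_mul (2*s))
    have h0 : HasDerivAt (fun y => s*(kp y*deriv V y) + km y*deriv (deriv V) y
        - 2*s*(s*(km y*V y) + kp y*deriv V y)) 0 x := by
      rw [hzero]; exact hasDerivAt_const x 0
    have key := hd.unique h0
    linear_combination key
  -- algebraic relation kp² - km² = 4C
  have hpm : ∀ x : ℝ, kp x ^ 2 - km x ^ 2 = 4*C := by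
    intro x
    have he : Real.exp (s*x) * Real.exp (-(s*x)) = 1 := by
      rw [← Real.exp_add]; simp
    rw [hkp x, hkm x, neg_mul]
    linear_combination 4*C*he
  -- the only zero of km
  have hsne : s ≠ 0 := ne_of_gt hs0
  set φ₀ : ℝ := Real.log C / (2*s) with hφ₀
  have hkmne : ∀ x : ℝ, x ≠ φ₀ → km x ≠ 0 := by
    intro x hx h0
    apply hx
    rw [hkm x, neg_mul, sub_eq_zero] at h0
    have h2 : Real.exp (s*x + s*x) = C := by
      rw [Real.exp_add]
      nth_rewrite 1 [h0]
      rw [mul_assoc, ← Real.exp_add]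
      simp
    have h3 : s*x + s*x = Real.log C := by rw [← Real.log_exp (s*x + s*x), h2]
    rw [hφ₀, ← h3]
    field_simp
    ring
  -- the auxiliary functions
  set D : ℝ → ℝ := fun x => deriv V x * kp x - 2*s*(km x * V x) with hDdef
  set D1 : ℝ → ℝ := fun x => kp x * deriv (deriv V) x - 2*s^2*(kp x * V x)
    - s*(km x * deriv V x) with hD1def
  set D2 : ℝ → ℝ := fun x => (s*(km x * deriv (deriv V) x) + kp x * deriv (deriv (deriv V)) x)
    - 2*s^2*(s*(km x*V x) + kp x*deriv V x)
    - s*(s*(kp x*deriv V x) + km x*deriv (deriv V) x) with hD2def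
  set E : ℝ → ℝ := fun x => D1 x * kp x - s*(km x * D x) with hEdef
  set Ed : ℝ → ℝ := fun x => D2 x * kp x + D1 x * (s * km x)
    - s * (s * kp x * D x + km x * D1 x) with hEddef
  have hDd : ∀ x : ℝ, HasDerivAt D (D1 x) x := by
    intro x
    have h := ((hW1at x).mul (hkpd x)).sub (((hkmd x).mul (hVat x)).const_mul (2*s))
    have hval : D1 x = deriv (deriv V) x * kp x + deriv V x * (s * km x)
        - 2*s*(s * kp x * V x + km x * deriv V x) := by
      rw [hD1def]; ring
    rw [hDdef, hval]; exact h
  have hD1d : ∀ x : ℝ, HasDerivAt D1 (D2 x) x := by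
    intro x
    have h := (((hkpd x).mul (hW2at x)).sub (((hkpd x).mul (hVat x)).const_mul (2*s^2))).sub
      (((hkmd x).mul (hW1at x)).const_mul s)
    have hval : D2 x = s * km x * deriv (deriv V) x + kp x * deriv (deriv (deriv V)) x
        - 2*s^2*(s * km x * V x + kp x * deriv V x)
        - s*(s * kp x * deriv V x + km x * deriv (deriv V) x) := by
      rw [hD2def]; ring
    rw [hD1def, hval]; exact h
  have hEderiv : ∀ x : ℝ, HasDerivAt E (Ed x) x := by
    intro x
    have h := ((hD1d x).mul (hkpd x)).sub (((hkmd x).mul (hDd x)).const_mul s)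
    have hval : Ed x = D2 x * kp x + D1 x * (s * km x)
        - s * (s * kp x * D x + km x * D1 x) := by rw [hEddef]
    rw [hEdef, hval]; exact h
  -- Ed vanishes wherever km ≠ 0
  have claimA : ∀ x : ℝ, km x * Ed x = 0 := by
    intro x
    simp only [hEddef, hD2def, hD1def, hDdef]
    linear_combination (kp x)^2 * (P3 x) - s^2*(kp x)^2*(P1 x)
  have hne : ∀ x : ℝ, km x ≠ 0 → Ed x = 0 := fun x hx =>
    (mul_eq_zero.mp (claimA x)).resolve_left hx
  -- continuity of Ed
  have hkpC : Continuous kp := by rw [hkpfun]; fun_prop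
  have hkmC : Continuous km := by rw [hkmfun]; fun_prop
  have hVC : Continuous V := hVs.continuous
  have hV1C : Continuous (deriv V) := hV0d.2.continuous
  have hV2C : Continuous (deriv (deriv V)) := hV1d.2.continuous
  have hV3C : Continuous (deriv (deriv (deriv V))) := hV2d.2.continuous
  have hEdC : Continuous Ed := by
    simp only [hEddef, hD2def, hD1def, hDdef]
    fun_prop
  -- Ed vanishes everywhere
  have hEdzero : ∀ x : ℝ, Ed x = 0 := by
    intro x
    by_cases hx : x = φ₀
    · rw [hx]
      have t1 : Filter.Tendsto Ed (𝓝[≠] φ₀) (𝓝 (Ed φ₀)) := hEdC.continuousAt.continuousWithinAt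
      have t2 : Filter.Tendsto Ed (𝓝[≠] φ₀) (𝓝 0) := by
        refine Filter.Tendsto.congr' ?_ tendsto_const_nhds
        filter_upwards [self_mem_nhdsWithin] with y hy
        exact (hne y (hkmne y (by simpa using hy))).symm
      exact tendsto_nhds_unique t1 t2
    · exact hne x (hkmne x hx)
  -- E is constant
  have hEdiff : Differentiable ℝ E := fun x => (hEderiv x).differentiableAt
  have hEconst : ∀ x : ℝ, E x = E 0 := fun x =>
    is_const_of_deriv_eq_zero hEdiff (fun y => by rw [(hEderiv y).deriv, hEdzero y]) x 0
  -- conclude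
  refine ⟨E 0 / (12*C^2), fun φ => ?_⟩
  have key : km φ ^ 2 * E φ = 12*C^2 * V φ := by
    simp only [hEdef, hD1def, hDdef]
    linear_combination (kp φ^2*km φ)*(P2 φ) + (4*s*C*kp φ - s*kp φ*km φ^2)*(P1 φ)
      + (8*s^2*C*V φ + s*(km φ*(deriv V φ*kp φ - 2*s*(km φ*V φ))))*(hpm φ)
      + 32*C^2*V φ*hs2
  rw [hEconst φ] at key
  have h12 : (12*C^2) ≠ 0 := by positivity
  rw [div_mul_eq_mul_div, eq_comm, div_eq_iff h12]
  linear_combination key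
end
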